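/- Let d ≥ 2, n ≥ 2, let ω : ℝ → ℝ^d be C², let k_2, …, k_n ∈ ℤ^{d−1}, and let φ_2, …, φ_n : I → ℝ be C² on an open interval I ⊆ ℝ such that ⟨ω̃(s), k_j⟩ ≠ 0 for all s ∈ I and 2 ≤ j ≤ n, where ω̃(s) = (ω_1(s), …, ω_{d−1}(s)). Define H_n(θ, r) = ⟨ω(r_d), r⟩ − Σ_{j=2}^n φ_j(r_d) sin(2π⟨k_j, θ̃⟩), H_0(θ, r) = ⟨ω(r_d), r⟩, and the map Ψ_n(θ, r) = (θ̃, θ_d − (1/2π) Σ_{j=2}^n (d/ds)[φ_j(s)/⟨ω̃(s), k_j⟩] cos(2π⟨k_j, θ̃⟩), r̃ − Σ_{j=2}^n (φ_j(s)/⟨ω̃(s), k_j⟩) sin(2π⟨k_j, θ̃⟩) · k_j, s), where s = r_d. Then on ℝ^d × ℝ^{d−1} × I: (a) H_n(θ, r) = H_0(Ψ_n(θ, r)) for all (θ, r), and (b) the Jacobian matrix of Ψ_n at every point belongs to the symplectic group Sp(2d, ℝ). -/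

import Mathlib

open Real Filter Set

noncomputable section

/-- The phase space `T^d × ℝ^d`, realized as pairs `(θ, r)` of functions `Fin d → ℝ`. -/
abbrev Phase (d : ℕ) := (Fin d → ℝ) × (Fin d → ℝ)

/-- `H` is `ℤ^d`-periodic in the angle variable `θ`. -/
def PeriodicTheta {d : ℕ} (H : Phase d → ℝ) : Prop :=
  ∀ (θ r : Fin d → ℝ) (m : Fin d → ℤ), H (fun i => θ i + (m i : ℝ), r) = H (θ, r)

/-- `H` is real entire: it is the restriction to `ℝ^d × ℝ^d` of a holomorphic
function on `ℂ^d × ℂ^d`. -/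
def RealEntire {d : ℕ} (H : Phase d → ℝ) : Prop :=
  ∃ F : (Fin d → ℂ) × (Fin d → ℂ) → ℂ, Differentiable ℂ F ∧
    ∀ θ r : Fin d → ℝ, F (fun i => (θ i : ℂ), fun i => (r i : ℂ)) = H (θ, r)

/-- `H` is of the form `(*)` with frequency `ω`:
`|H(θ,r) − ⟨ω,r⟩| ≤ C‖r‖²` for all `θ` and all `‖r‖ ≤ δ`. -/
def FormStar {d : ℕ} (H : Phase d → ℝ) (ω : Fin d → ℝ) : Prop :=
  ∃ C δ : ℝ, 0 < C ∧ 0 < δ ∧ ∀ θ r : Fin d → ℝ, ‖r‖ ≤ δ →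
    |H (θ, r) - ∑ i, ω i * r i| ≤ C * ‖r‖ ^ 2

/-- `(θ, r)` is a solution of Hamilton's equations for `H` on the set `J`:
`θ' = ∂H/∂r`, `r' = −∂H/∂θ`. -/
def IsSolutionOn {d : ℕ} (H : Phase d → ℝ) (θ r : ℝ → Fin d → ℝ) (J : Set ℝ) : Prop :=
  ∀ t ∈ J, ∀ i : Fin d,
    HasDerivWithinAt (fun u => θ u i) (fderiv ℝ H (θ t, r t) (0, Pi.single i 1)) J t ∧
    HasDerivWithinAt (fun u => r u i) (-(fderiv ℝ H (θ t, r t) (Pi.single i 1, 0))) J t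

/-- The canonical symplectic form `Σ_i dθ_i ∧ dr_i` on `ℝ^d × ℝ^d`. -/
def SymplForm {d : ℕ} (u v : Phase d) : ℝ := ∑ i, (u.1 i * v.2 i - u.2 i * v.1 i)

/-- The Jacobian matrix of `Ψ` at `z` belongs to `Sp(2d, ℝ)`:
the derivative of `Ψ` at `z` preserves the canonical symplectic form. -/
def JacobianSymplecticAt {d : ℕ} (Ψ : Phase d → Phase d) (z : Phase d) : Prop :=
  ∀ u v : Phase d, SymplForm (fderiv ℝ Ψ z u) (fderiv ℝ Ψ z v) = SymplForm u v

/-- Embedding of the first `d − 1` indices into `Fin d`. -/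
def emb (d : ℕ) : Fin (d - 1) → Fin d := Fin.castLE (Nat.sub_le d 1)

/-- The last index of `Fin d`. -/
def lst (d : ℕ) (hd : 0 < d) : Fin d := ⟨d - 1, Nat.sub_lt hd Nat.one_pos⟩

/-- `⟨ω̃(s), k_j⟩ = Σ_{i=1}^{d−1} ω_i(s) k_{j,i}`. -/
def Aj (d : ℕ) (ω : ℝ → Fin d → ℝ) (k : ℕ → Fin (d - 1) → ℤ) (j : ℕ) (s : ℝ) : ℝ :=
  ∑ i, ω s (emb d i) * (k j i : ℝ)

/-- `H_n(θ, r) = ⟨ω(r_d), r⟩ − Σ_{j=2}^n φ_j(r_d) sin(2π⟨k_j, θ̃⟩)`. -/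
def Hn (d n : ℕ) (hd : 0 < d) (ω : ℝ → Fin d → ℝ) (k : ℕ → Fin (d - 1) → ℤ)
    (φ : ℕ → ℝ → ℝ) (z : Phase d) : ℝ :=
  (∑ i, ω (z.2 (lst d hd)) i * z.2 i) -
    ∑ j ∈ Finset.Icc 2 n, φ j (z.2 (lst d hd)) *
      Real.sin (2 * π * ∑ i, (k j i : ℝ) * z.1 (emb d i))

/-- `H_0(θ, r) = ⟨ω(r_d), r⟩`. -/
def H0 (d : ℕ) (hd : 0 < d) (ω : ℝ → Fin d → ℝ) (z : Phase d) : ℝ :=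
  ∑ i, ω (z.2 (lst d hd)) i * z.2 i

/-- The map `Ψ_n(θ, r) = (θ̃, θ_d − (1/2π) Σ_j (d/ds)[φ_j(s)/⟨ω̃(s), k_j⟩] cos(2π⟨k_j, θ̃⟩),
r̃ − Σ_j (φ_j(s)/⟨ω̃(s), k_j⟩) sin(2π⟨k_j, θ̃⟩) k_j, s)`, with `s = r_d`. -/
def Psin (d n : ℕ) (hd : 0 < d) (ω : ℝ → Fin d → ℝ) (k : ℕ → Fin (d - 1) → ℤ)
    (φ : ℕ → ℝ → ℝ) (z : Phase d) : Phase d :=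
  (fun i => if i = lst d hd then
      z.1 (lst d hd) - (1 / (2 * π)) * ∑ j ∈ Finset.Icc 2 n,
        deriv (fun s => φ j s / Aj d ω k j s) (z.2 (lst d hd)) *
          Real.cos (2 * π * ∑ i', (k j i' : ℝ) * z.1 (emb d i'))
    else z.1 i,
   fun i => if h : (i : ℕ) < d - 1 then
      z.2 i - ∑ j ∈ Finset.Icc 2 n,
        (φ j (z.2 (lst d hd)) / Aj d ω k j (z.2 (lst d hd))) *
          Real.sin (2 * π * ∑ i', (k j i' : ℝ) * z.1 (emb d i')) * (k j ⟨i, h⟩ : ℝ)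
    else z.2 i)

/-!
`Ψ_n` is the time-one map of the Hamiltonian flow of
`G(θ̃, r_d) = -(1/2π) Σ_j g_j(r_d) cos(2π⟨k_j, θ̃⟩)`, where `g_j = φ_j / ⟨ω̃, k_j⟩`.
Since the coordinates `(θ̃, r_d)` Poisson-commute, this flow is the shear moving `θ_d` by
`∂_{r_d} G` and `r̃` by `-∂_θ̃ G`. The shear takes values in the isotropic span of
`∂_{θ_d}, ∂_{r̃}`, so the symplectic form changes under its Jacobian only by the antisymmetric part
of the Hessian of `G`, which is zero. For (a), `r_d` is fixed and `H_0` is linear in `r̃`, so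
`H_0 ∘ Ψ_n - H_0 = -⟨ω̃, ∂_θ̃ G⟩ = -Σ_j g_j ⟨ω̃, k_j⟩ sin(2π⟨k_j, θ̃⟩)`, and `g_j ⟨ω̃, k_j⟩ = φ_j`.
-/

open scoped Topology

section

variable {d : ℕ} (hd : 0 < d)

lemma emb_ne_lst (i : Fin (d - 1)) : emb d i ≠ lst d hd := by
  simp only [emb, lst, ne_eq, Fin.ext_iff, Fin.val_castLE]
  omega

lemma eq_lst_or_exists_emb (i : Fin d) : i = lst d hd ∨ ∃ i', i = emb d i' := by
  by_cases h : (i : ℕ) < d - 1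
  · exact Or.inr ⟨⟨i, h⟩, rfl⟩
  · exact Or.inl (Fin.ext (by simp only [lst]; omega))

lemma sum_univ_eq_sum_emb_add_lst (f : Fin d → ℝ) :
    ∑ i, f i = ∑ i : Fin (d - 1), f (emb d i) + f (lst d hd) := by
  obtain ⟨e, rfl⟩ : ∃ e, d = e + 1 := ⟨d - 1, by omega⟩
  exact Fin.sum_univ_castSucc f

/-- The Poisson-commuting coordinates `(θ̃, r_d)` of a phase point. -/
def commCoord : Phase d →L[ℝ] (Fin d → ℝ) :=
  ContinuousLinearMap.pi fun i =>
    if i = lst d hd then (ContinuousLinearMap.proj i).comp (ContinuousLinearMap.snd ℝ _ _)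
    else (ContinuousLinearMap.proj i).comp (ContinuousLinearMap.fst ℝ _ _)

/-- The Hamiltonian vector field `(∂_{r_d} G) ∂_{θ_d} - Σ_{i<d} (∂_{θ_i} G) ∂_{r_i}` of a function
`G` of `commCoord`, as a function of the differential `ℓ` of `G`. -/
def hamVec : ((Fin d → ℝ) →L[ℝ] ℝ) →L[ℝ] Phase d :=
  (ContinuousLinearMap.pi fun i =>
      if i = lst d hd then ContinuousLinearMap.apply ℝ ℝ (Pi.single i 1) else 0).prod
    (ContinuousLinearMap.pi fun i =>
      if i = lst d hd then 0 else -ContinuousLinearMap.apply ℝ ℝ (Pi.single i 1))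

variable {hd}

@[simp]
lemma commCoord_apply (u : Phase d) (i : Fin d) :
    commCoord hd u i = if i = lst d hd then u.2 i else u.1 i := by
  unfold commCoord
  split_ifs <;> simp [*]

@[simp]
lemma commCoord_apply_lst (u : Phase d) : commCoord hd u (lst d hd) = u.2 (lst d hd) := by
  simp

@[simp]
lemma commCoord_apply_emb (u : Phase d) (i : Fin (d - 1)) :
    commCoord hd u (emb d i) = u.1 (emb d i) := by
  simp [emb_ne_lst hd i]

@[simp]
lemma hamVec_apply_fst (ℓ : (Fin d → ℝ) →L[ℝ] ℝ) (i : Fin d) :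
    (hamVec hd ℓ).1 i = if i = lst d hd then ℓ (Pi.single i 1) else 0 := by
  unfold hamVec
  split_ifs <;> simp [*]

@[simp]
lemma hamVec_apply_snd (ℓ : (Fin d → ℝ) →L[ℝ] ℝ) (i : Fin d) :
    (hamVec hd ℓ).2 i = if i = lst d hd then 0 else -ℓ (Pi.single i 1) := by
  unfold hamVec
  split_ifs <;> simp [*]

lemma commCoord_hamVec (ℓ : (Fin d → ℝ) →L[ℝ] ℝ) : commCoord hd (hamVec hd ℓ) = 0 := by
  ext i
  by_cases h : i = lst d hd <;> simp [h]

lemma symplForm_add_left (u u' v : Phase d) :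
    SymplForm (u + u') v = SymplForm u v + SymplForm u' v := by
  simp only [SymplForm, ← Finset.sum_add_distrib, Prod.fst_add, Prod.snd_add, Pi.add_apply]
  exact Finset.sum_congr rfl fun _ _ => by ring

lemma symplForm_add_right (u v v' : Phase d) :
    SymplForm u (v + v') = SymplForm u v + SymplForm u v' := by
  simp only [SymplForm, ← Finset.sum_add_distrib, Prod.fst_add, Prod.snd_add, Pi.add_apply]
  exact Finset.sum_congr rfl fun _ _ => by ring

lemma symplForm_comm (u v : Phase d) : SymplForm u v = -SymplForm v u := by
  simp only [SymplForm, ← Finset.sum_neg_distrib]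
  exact Finset.sum_congr rfl fun _ _ => by ring

lemma symplForm_hamVec_left (ℓ : (Fin d → ℝ) →L[ℝ] ℝ) (v : Phase d) :
    SymplForm (hamVec hd ℓ) v = ℓ (commCoord hd v) := by
  have hsingle (i : Fin d) (c : ℝ) : ℓ (Pi.single i c) = c * ℓ (Pi.single i 1) := by
    rw [← smul_eq_mul, ← map_smul, ← Pi.single_smul', smul_eq_mul, mul_one]
  conv_rhs => rw [← Finset.univ_sum_single (commCoord hd v)]
  simp only [SymplForm, map_sum, hsingle _ (commCoord hd v _)]
  refine Finset.sum_congr rfl fun i _ => ?_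
  by_cases h : i = lst d hd <;> simp [h] <;> ring

lemma symplForm_hamVec_hamVec (ℓ ℓ' : (Fin d → ℝ) →L[ℝ] ℝ) :
    SymplForm (hamVec hd ℓ) (hamVec hd ℓ') = 0 := by
  rw [symplForm_hamVec_left, commCoord_hamVec, map_zero]

lemma symplForm_add_hamVec_add_hamVec (u v : Phase d) (ℓ ℓ' : (Fin d → ℝ) →L[ℝ] ℝ) :
    SymplForm (u + hamVec hd ℓ) (v + hamVec hd ℓ') =
      SymplForm u v + ℓ (commCoord hd v) - ℓ' (commCoord hd u) := by
  rw [symplForm_add_left, symplForm_add_right, symplForm_add_right, symplForm_hamVec_hamVec,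
    symplForm_comm u (hamVec hd ℓ'), symplForm_hamVec_left, symplForm_hamVec_left]
  ring

variable (hd) in
/-- The time-one map of the Hamiltonian flow of `G ∘ commCoord`. -/
def gradShear (G : (Fin d → ℝ) → ℝ) (z : Phase d) : Phase d :=
  z + hamVec hd (fderiv ℝ G (commCoord hd z))

lemma hasFDerivAt_gradShear {G : (Fin d → ℝ) → ℝ} {z : Phase d}
    (hG : DifferentiableAt ℝ (fderiv ℝ G) (commCoord hd z)) :
    HasFDerivAt (gradShear hd G)
      (ContinuousLinearMap.id ℝ (Phase d) +
        (hamVec hd).comp ((fderiv ℝ (fderiv ℝ G) (commCoord hd z)).comp (commCoord hd))) z :=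
  (hasFDerivAt_id z).add
    ((hamVec hd).hasFDerivAt.comp z (hG.hasFDerivAt.comp z (commCoord hd).hasFDerivAt))

/-- The symplectic form picks up the antisymmetric part of the Hessian of `G`, which vanishes. -/
theorem jacobianSymplecticAt_gradShear {G : (Fin d → ℝ) → ℝ} {z : Phase d}
    (hG : ContDiffAt ℝ 2 G (commCoord hd z)) : JacobianSymplecticAt (gradShear hd G) z := by
  have hsymm : IsSymmSndFDerivAt ℝ G (commCoord hd z) := hG.isSymmSndFDerivAt (by simp)
  have hdiff : DifferentiableAt ℝ (fderiv ℝ G) (commCoord hd z) :=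
    (hG.fderiv_right (m := 1) le_rfl).differentiableAt one_ne_zero
  intro u v
  simp only [(hasFDerivAt_gradShear hdiff).fderiv, add_apply,
    ContinuousLinearMap.id_apply, ContinuousLinearMap.comp_apply,
    symplForm_add_hamVec_add_hamVec, hsymm (commCoord hd u) (commCoord hd v), add_sub_cancel_right]

section GeneratingFunction

variable {n : ℕ} {k : ℕ → Fin (d - 1) → ℤ} {g : ℕ → ℝ → ℝ}

variable (hd n k g) in
def genFun (x : Fin d → ℝ) : ℝ :=
  -(1 / (2 * π)) * ∑ j ∈ Finset.Icc 2 n,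
    g j (x (lst d hd)) * Real.cos (2 * π * ∑ i, (k j i : ℝ) * x (emb d i))

lemma contDiffAt_genFun {x : Fin d → ℝ}
    (hg : ∀ j ∈ Finset.Icc 2 n, ContDiffAt ℝ 2 (g j) (x (lst d hd))) :
    ContDiffAt ℝ 2 (genFun hd n k g) x := by
  refine contDiffAt_const.mul (ContDiffAt.sum fun j hj => ?_)
  refine ((hg j hj).comp x (contDiff_apply ℝ ℝ (lst d hd)).contDiffAt).mul ?_
  refine Real.contDiff_cos.contDiffAt.comp x (contDiffAt_const.mul (ContDiffAt.sum fun i _ => ?_))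
  exact contDiffAt_const.mul (contDiff_apply ℝ ℝ (emb d i)).contDiffAt

lemma fderiv_genFun_apply {x : Fin d → ℝ}
    (hg : ∀ j ∈ Finset.Icc 2 n, DifferentiableAt ℝ (g j) (x (lst d hd))) (v : Fin d → ℝ) :
    fderiv ℝ (genFun hd n k g) x v = -(1 / (2 * π)) * ∑ j ∈ Finset.Icc 2 n,
      (deriv (g j) (x (lst d hd)) * v (lst d hd) *
          Real.cos (2 * π * ∑ i, (k j i : ℝ) * x (emb d i)) -
        g j (x (lst d hd)) * Real.sin (2 * π * ∑ i, (k j i : ℝ) * x (emb d i)) *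
          (2 * π * ∑ i, (k j i : ℝ) * v (emb d i))) := by
  have hphase (j : ℕ) := (HasFDerivAt.fun_sum (u := Finset.univ)
    (A := fun i (y : Fin d → ℝ) => (k j i : ℝ) * y (emb d i)) fun i _ =>
      (hasFDerivAt_apply (𝕜 := ℝ) (emb d i) x).const_mul (k j i : ℝ)).const_mul (2 * π)
  have hterm := fun j (hj : j ∈ Finset.Icc 2 n) =>
    ((hg j hj).hasDerivAt.comp_hasFDerivAt x (hasFDerivAt_apply (lst d hd) x)).mul
      ((Real.hasDerivAt_cos _).comp_hasFDerivAt x (hphase j))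
  have hG : HasFDerivAt (genFun hd n k g) _ x := (HasFDerivAt.fun_sum hterm).const_mul _
  simp only [hG.fderiv, smul_apply, sum_apply, add_apply, ContinuousLinearMap.proj_apply,
    smul_eq_mul, Function.comp_apply]
  exact congrArg _ (Finset.sum_congr rfl fun _ _ => by ring)

lemma fderiv_genFun_single_lst {x : Fin d → ℝ}
    (hg : ∀ j ∈ Finset.Icc 2 n, DifferentiableAt ℝ (g j) (x (lst d hd))) :
    fderiv ℝ (genFun hd n k g) x (Pi.single (lst d hd) 1) = -(1 / (2 * π)) *
      ∑ j ∈ Finset.Icc 2 n,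
        deriv (g j) (x (lst d hd)) * Real.cos (2 * π * ∑ i, (k j i : ℝ) * x (emb d i)) := by
  simp [fderiv_genFun_apply hg, emb_ne_lst hd]

lemma fderiv_genFun_single_emb {x : Fin d → ℝ}
    (hg : ∀ j ∈ Finset.Icc 2 n, DifferentiableAt ℝ (g j) (x (lst d hd))) (i' : Fin (d - 1)) :
    fderiv ℝ (genFun hd n k g) x (Pi.single (emb d i') 1) = ∑ j ∈ Finset.Icc 2 n,
      g j (x (lst d hd)) * Real.sin (2 * π * ∑ i, (k j i : ℝ) * x (emb d i)) * (k j i' : ℝ) := by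
  have hemb : Function.Injective (emb d) := Fin.castLE_injective _
  simp only [fderiv_genFun_apply hg, Pi.single_apply, (emb_ne_lst hd i').symm, hemb.eq_iff,
    if_false, mul_zero, zero_mul, zero_sub, mul_ite, mul_one, Finset.sum_ite_eq',
    Finset.mem_univ, if_true, Finset.mul_sum]
  refine Finset.sum_congr rfl fun j _ => ?_
  field_simp

end GeneratingFunction

section Psin

variable {n : ℕ} {ω : ℝ → Fin d → ℝ} {k : ℕ → Fin (d - 1) → ℤ} {φ : ℕ → ℝ → ℝ}

lemma Psin_fst_lst (z : Phase d) :
    (Psin d n hd ω k φ z).1 (lst d hd) = z.1 (lst d hd) - 1 / (2 * π) *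
      ∑ j ∈ Finset.Icc 2 n, deriv (fun s => φ j s / Aj d ω k j s) (z.2 (lst d hd)) *
        Real.cos (2 * π * ∑ i, (k j i : ℝ) * z.1 (emb d i)) :=
  if_pos rfl

lemma Psin_fst_emb (z : Phase d) (i : Fin (d - 1)) :
    (Psin d n hd ω k φ z).1 (emb d i) = z.1 (emb d i) :=
  if_neg (emb_ne_lst hd i)

lemma Psin_snd_lst (z : Phase d) : (Psin d n hd ω k φ z).2 (lst d hd) = z.2 (lst d hd) :=
  dif_neg (by simp [lst])

lemma Psin_snd_emb (z : Phase d) (i : Fin (d - 1)) :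
    (Psin d n hd ω k φ z).2 (emb d i) = z.2 (emb d i) - ∑ j ∈ Finset.Icc 2 n,
      φ j (z.2 (lst d hd)) / Aj d ω k j (z.2 (lst d hd)) *
        Real.sin (2 * π * ∑ i', (k j i' : ℝ) * z.1 (emb d i')) * (k j i : ℝ) :=
  dif_pos (by simp [emb])

theorem Psin_eq_gradShear {z : Phase d}
    (hg : ∀ j ∈ Finset.Icc 2 n,
      DifferentiableAt ℝ (fun s => φ j s / Aj d ω k j s) (z.2 (lst d hd))) :
    Psin d n hd ω k φ z = gradShear hd (genFun hd n k fun j s => φ j s / Aj d ω k j s) z := by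
  have hg' : ∀ j ∈ Finset.Icc 2 n,
      DifferentiableAt ℝ (fun s => φ j s / Aj d ω k j s) (commCoord hd z (lst d hd)) := by
    simpa using hg
  ext i <;> rcases eq_lst_or_exists_emb hd i with rfl | ⟨i, rfl⟩ <;>
    simp [gradShear, Psin_fst_lst, Psin_fst_emb, Psin_snd_lst, Psin_snd_emb,
      fderiv_genFun_single_lst hg', fderiv_genFun_single_emb hg', emb_ne_lst hd, sub_eq_add_neg]

lemma sum_mul_sum_eq_sum_mul_Aj (S : Finset ℕ) (c : ℕ → ℝ) (s : ℝ) :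
    ∑ i, ω s (emb d i) * ∑ j ∈ S, c j * (k j i : ℝ) = ∑ j ∈ S, c j * Aj d ω k j s := by
  simp only [Aj, Finset.mul_sum]
  rw [Finset.sum_comm]
  exact Finset.sum_congr rfl fun _ _ => Finset.sum_congr rfl fun _ _ => by ring

theorem Hn_eq_H0_Psin (z : Phase d)
    (hA : ∀ j ∈ Finset.Icc 2 n, Aj d ω k j (z.2 (lst d hd)) ≠ 0) :
    Hn d n hd ω k φ z = H0 d hd ω (Psin d n hd ω k φ z) := by
  have hcancel : ∀ j ∈ Finset.Icc 2 n,
      φ j (z.2 (lst d hd)) / Aj d ω k j (z.2 (lst d hd)) *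
        Real.sin (2 * π * ∑ i, (k j i : ℝ) * z.1 (emb d i)) * Aj d ω k j (z.2 (lst d hd)) =
      φ j (z.2 (lst d hd)) * Real.sin (2 * π * ∑ i, (k j i : ℝ) * z.1 (emb d i)) :=
    fun j hj => by field_simp [hA j hj]
  simp only [Hn, H0, sum_univ_eq_sum_emb_add_lst hd, Psin_snd_lst, Psin_snd_emb, mul_sub,
    Finset.sum_sub_distrib, sum_mul_sum_eq_sum_mul_Aj, Finset.sum_congr rfl hcancel]
  ring

theorem contDiffOn_div_Aj {I : Set ℝ} (hω : ContDiff ℝ 2 ω) {j : ℕ}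
    (hφ : ContDiffOn ℝ 2 (φ j) I) (hA : ∀ s ∈ I, Aj d ω k j s ≠ 0) :
    ContDiffOn ℝ 2 (fun s => φ j s / Aj d ω k j s) I :=
  hφ.div (ContDiff.sum fun i _ =>
    ((contDiff_apply ℝ ℝ (emb d i)).comp hω).mul contDiff_const).contDiffOn hA

theorem jacobianSymplecticAt_Psin {I : Set ℝ} (hI : IsOpen I)
    (hg : ∀ j ∈ Finset.Icc 2 n, ContDiffOn ℝ 2 (fun s => φ j s / Aj d ω k j s) I)
    {z : Phase d} (hz : z.2 (lst d hd) ∈ I) : JacobianSymplecticAt (Psin d n hd ω k φ) z := by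
  have hU : IsOpen {z : Phase d | z.2 (lst d hd) ∈ I} := hI.preimage (by fun_prop)
  have hgAt : ∀ z : Phase d, z.2 (lst d hd) ∈ I → ∀ j ∈ Finset.Icc 2 n,
      ContDiffAt ℝ 2 (fun s => φ j s / Aj d ω k j s) (z.2 (lst d hd)) :=
    fun z hz j hj => (hg j hj).contDiffAt (hI.mem_nhds hz)
  have heq : Psin d n hd ω k φ =ᶠ[𝓝 z]
      gradShear hd (genFun hd n k fun j s => φ j s / Aj d ω k j s) :=
    Filter.eventually_of_mem (hU.mem_nhds hz) fun z' hz' =>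
      Psin_eq_gradShear fun j hj => (hgAt z' hz' j hj).differentiableAt two_ne_zero
  intro u v
  rw [heq.fderiv_eq]
  exact jacobianSymplecticAt_gradShear (contDiffAt_genFun (by simpa using hgAt z hz)) u v

end Psin

end

/-- Under the stated regularity and non-resonance hypotheses on an
open interval `I`, one has `H_n = H_0 ∘ Ψ_n` on `{r_d ∈ I}`, and the Jacobian of
`Ψ_n` is symplectic at every such point. -/
theorem statement14 (d n : ℕ) (hd : 2 ≤ d)
    (ω : ℝ → Fin d → ℝ) (hω : ContDiff ℝ 2 ω)
    (k : ℕ → Fin (d - 1) → ℤ)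
    (I : Set ℝ) (hIopen : IsOpen I)
    (φ : ℕ → ℝ → ℝ) (hφ : ∀ j ∈ Finset.Icc 2 n, ContDiffOn ℝ 2 (φ j) I)
    (hres : ∀ s ∈ I, ∀ j ∈ Finset.Icc 2 n, Aj d ω k j s ≠ 0) :
    (∀ z : Phase d, z.2 (lst d (by omega)) ∈ I →
      Hn d n (by omega) ω k φ z = H0 d (by omega) ω (Psin d n (by omega) ω k φ z)) ∧
    (∀ z : Phase d, z.2 (lst d (by omega)) ∈ I →
      JacobianSymplecticAt (Psin d n (by omega) ω k φ) z) :=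
  ⟨fun z hz => Hn_eq_H0_Psin z fun j hj => hres _ hz j hj,
    fun _ hz => jacobianSymplecticAt_Psin hIopen
      (fun j hj => contDiffOn_div_Aj hω (hφ j hj) fun s hs => hres s hs j hj) hz⟩
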